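/- arXiv:2502.11692 — 2 statements merged into one kernel-verified Lean document; each statement's English description precedes it below -/
import Mathlib

section
/- Let a > 1 be a fixed real number. For all sufficiently small c > 0 the function φ_{a,c} has exactly two zeros in (0,1); denote by z_φ(c) the larger of the two. Then (1 − z_φ(c))·(log a)/c tends to 1 as c tends to 0 from above, i.e. 1 − z_φ(c) ∼ c/log a as c → 0⁺. -/
open Set Real Filter

private lemma phi_hasDerivAt (L c z : ℝ) (h0 : 0 < z) (h1 : z < 1) :
    HasDerivAt (fun z : ℝ => Real.log z + L - c * z ^ 2 / (1 - z))
      (((1 - z) ^ 2 - c * (z ^ 2 * (2 - z))) / (z * (1 - z) ^ 2)) z := by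
  have hz1 : (1 : ℝ) - z ≠ 0 := by linarith
  have ha1 : HasDerivAt (fun z : ℝ => Real.log z + L) (z⁻¹) z :=
    (Real.hasDerivAt_log h0.ne').add_const L
  have h2 : HasDerivAt (fun z : ℝ => c * z ^ 2) (c * (2 * z)) z := by
    simpa using (hasDerivAt_pow 2 z).const_mul c
  have h3 : HasDerivAt (fun z : ℝ => 1 - z) (-1) z := by
    simpa using (hasDerivAt_id z).const_sub 1
  have h4 := h2.div h3 hz1
  have h5 := ha1.sub h4
  refine h5.congr_deriv ?_
  field_simp
  ring

private lemma phi_contOn (L c : ℝ) :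
    ContinuousOn (fun z : ℝ => Real.log z + L - c * z ^ 2 / (1 - z)) (Set.Ioo 0 1) := by
  apply ContinuousOn.sub
  · exact (Real.continuousOn_log.mono (fun x hx => by simp [ne_of_gt hx.1])).add
      continuousOn_const
  · exact ContinuousOn.div (by fun_prop) (by fun_prop)
      (fun z hz => sub_ne_zero.mpr (ne_of_gt (show (1:ℝ) > z from hz.2)))

private lemma D_hasDerivAt (c z : ℝ) :
    HasDerivAt (fun z : ℝ => (1 - z) ^ 2 - c * (z ^ 2 * (2 - z)))
      (-(2 * (1 - z)) - c * (4 * z - 3 * z ^ 2)) z := by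
  have h1 : HasDerivAt (fun z : ℝ => (1 - z) ^ 2) (-(2 * (1 - z))) z := by
    have := ((hasDerivAt_id z).const_sub 1).pow 2
    refine this.congr_deriv ?_
    simp only [id_eq]
    push_cast
    ring
  have h2 : HasDerivAt (fun z : ℝ => z ^ 2 * (2 - z)) (4 * z - 3 * z ^ 2) z := by
    have := (hasDerivAt_pow 2 z).mul ((hasDerivAt_id z).const_sub 2)
    refine this.congr_deriv ?_
    simp only [id_eq]
    push_cast
    ring
  exact h1.sub (h2.const_mul c)

private lemma D_strictAntiOn (c : ℝ) (hc : 0 < c) :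
    StrictAntiOn (fun z : ℝ => (1 - z) ^ 2 - c * (z ^ 2 * (2 - z))) (Set.Icc 0 1) := by
  apply strictAntiOn_of_deriv_neg (convex_Icc 0 1) (by fun_prop)
  intro z hz
  rw [interior_Icc] at hz
  obtain ⟨hz1, hz2⟩ := hz
  rw [(D_hasDerivAt c z).deriv]
  nlinarith [mul_pos hc (mul_pos hz1 (by linarith : (0:ℝ) < 4 - 3*z))]

private lemma exists_zero_above (b c p : ℝ) (hb : 0 < b) (hc : 0 < c)
    (hcb : c < 16 * b ^ 2) (hp1 : 1/2 ≤ p) (hp2 : p < 1)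
    (hlogp : -(b/2) ≤ Real.log p) (hcp : c * p ^ 2 / (1 - p) < b / 2) :
    ∃ z, z ∈ Set.Ioo (0:ℝ) 1 ∧ Real.log z + b - c * z ^ 2 / (1 - z) = 0 ∧ p ≤ z := by
  set f : ℝ → ℝ := fun z => Real.log z + b - c * z ^ 2 / (1 - z) with hf
  set q : ℝ := max p (1 - c / (8 * b)) with hq
  have hq1 : p ≤ q := le_max_left _ _
  have hqlt1 : q < 1 := max_lt hp2 (by nlinarith [div_pos hc (by linarith : (0:ℝ) < 8 * b)])
  have hq2 : 1 - q ≤ c / (8 * b) := by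
    have := le_max_right p (1 - c / (8 * b)); linarith
  have hq0 : 1/2 ≤ q := hp1.trans hq1
  have hfp : 0 < f p := by
    simp only [hf]
    linarith
  have hfq : f q < 0 := by
    have hlogq : Real.log q < 0 := Real.log_neg (by linarith) hqlt1
    have h1q : (0:ℝ) < 1 - q := by linarith
    have h2b : 2 * b ≤ c * q ^ 2 / (1 - q) := by
      rw [le_div_iff₀ h1q]
      have e1 : 2 * b * (1 - q) ≤ 2 * b * (c / (8 * b)) :=
        mul_le_mul_of_nonneg_left hq2 (by linarith)
      have e2 : 2 * b * (c / (8 * b)) = c / 4 := by field_simp; ring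
      have e3 : c / 4 ≤ c * q ^ 2 := by
        nlinarith [mul_nonneg (mul_nonneg hc.le (by linarith : (0:ℝ) ≤ q - 1/2))
          (by linarith : (0:ℝ) ≤ q + 1/2)]
      linarith
    simp only [hf]
    linarith
  have hcont : ContinuousOn f (Set.Icc p q) := by
    apply (phi_contOn b c).mono
    intro x hx
    exact ⟨by linarith [hx.1], lt_of_le_of_lt hx.2 hqlt1⟩
  have h0mem : (0:ℝ) ∈ Set.Icc (f q) (f p) := ⟨le_of_lt hfq, le_of_lt hfp⟩
  obtain ⟨z, hz, hfz⟩ := intermediate_value_Icc' hq1 hcont h0mem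
  exact ⟨z, ⟨by linarith [hz.1], lt_of_le_of_lt hz.2 hqlt1⟩, hfz, hz.1⟩

set_option maxHeartbeats 1000000 in
private lemma zero_set_eq (b c w zl : ℝ) (hb : 0 < b) (hc : 0 < c)
    (hw1 : 1/2 ≤ w) (hw2 : w < 1) (hlogw : -(b/2) ≤ Real.log w)
    (hzl0 : 0 < zl) (hzl1 : zl < 1) (hlogzl : Real.log zl = -(2*b))
    (hcb : c < 16 * b ^ 2)
    (hcw : c * w ^ 2 / (1 - w) < b / 2)
    (hczl : c < (1 - zl) ^ 2 / 2) :
    {z ∈ Set.Ioo (0:ℝ) 1 | Real.log z + b - c * z ^ 2 / (1 - z) = 0}.encard = 2 := by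
  set f : ℝ → ℝ := fun z => Real.log z + b - c * z ^ 2 / (1 - z) with hf
  set D : ℝ → ℝ := fun z => (1 - z) ^ 2 - c * (z ^ 2 * (2 - z)) with hD
  set q : ℝ := max w (1 - c / (8 * b)) with hq
  have hq1 : w ≤ q := le_max_left _ _
  have hqlt1 : q < 1 := max_lt hw2 (by nlinarith [div_pos hc (by linarith : (0:ℝ) < 8 * b)])
  have hq2 : 1 - q ≤ c / (8 * b) := by
    have := le_max_right w (1 - c / (8 * b)); linarith
  have hq0 : 1/2 ≤ q := hw1.trans hq1
  have h1q : (0:ℝ) < 1 - q := by linarith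
  -- D q < 0
  have hDq : D q < 0 := by
    have e1 : (1 - q) ^ 2 ≤ (c / (8 * b)) ^ 2 := by
      apply pow_le_pow_left₀ (by linarith) hq2
    have e2 : (c / (8 * b)) ^ 2 < c / 4 := by
      rw [div_pow, div_lt_div_iff₀ (by positivity) (by norm_num)]
      nlinarith
    have e3 : c / 4 ≤ c * (q ^ 2 * (2 - q)) := by
      nlinarith [mul_nonneg (mul_nonneg hc.le (by linarith : (0:ℝ) ≤ q - 1/2))
          (by linarith : (0:ℝ) ≤ q + 1/2), mul_nonneg (mul_nonneg hc.le
          (mul_self_nonneg q)) (by linarith : (0:ℝ) ≤ 1 - q)]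
    simp only [hD]
    linarith
  -- D zl > 0
  have hDzl : 0 < D zl := by
    simp only [hD]
    have h2 : c * (zl ^ 2 * (2 - zl)) ≤ 2 * c := by
      nlinarith [mul_nonneg hc.le (show (0:ℝ) ≤ 2 - zl ^ 2 * (2 - zl) by
        nlinarith [mul_nonneg (mul_nonneg hzl0.le hzl0.le) hzl0.le,
          mul_nonneg (by linarith : (0:ℝ) ≤ 1 - zl) (by linarith : (0:ℝ) ≤ 1 + zl)])]
    linarith
  have hAnti := D_strictAntiOn c hc
  rw [← hD] at hAnti
  have hzlq : zl < q := by
    by_contra h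
    push_neg at h
    rcases h.lt_or_eq with h' | h'
    · have := hAnti ⟨by linarith, by linarith⟩ ⟨hzl0.le, hzl1.le⟩ h'
      linarith
    · rw [← h'] at hDzl; linarith
  -- the critical point zs
  have hDcont : ContinuousOn D (Set.Icc zl q) := by fun_prop
  obtain ⟨zs, hzs, hDzs⟩ := intermediate_value_Icc' hzlq.le hDcont ⟨hDq.le, hDzl.le⟩
  have hzs0 : 0 < zs := lt_of_lt_of_le hzl0 hzs.1
  have hzs1 : zs < 1 := lt_of_le_of_lt hzs.2 hqlt1
  -- D is positive left of zs, negative right of zs (within Icc 0 1)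
  have hDpos : ∀ z, 0 < z → z < zs → 0 < D z := fun z h0 h1 => by
    have := hAnti ⟨h0.le, by linarith⟩ ⟨hzs0.le, hzs1.le⟩ h1
    rw [hDzs] at this; exact this
  have hDneg : ∀ z, zs < z → z < 1 → D z < 0 := fun z h0 h1 => by
    have := hAnti ⟨hzs0.le, hzs1.le⟩ ⟨by linarith, h1.le⟩ h0
    rw [hDzs] at this; exact this
  -- monotonicity of f
  have hmono : StrictMonoOn f (Set.Ioc 0 zs) := by
    apply strictMonoOn_of_deriv_pos (convex_Ioc 0 zs)
    · exact (phi_contOn b c).mono (fun x hx => ⟨hx.1, lt_of_le_of_lt hx.2 hzs1⟩)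
    · intro z hz
      rw [interior_Ioc] at hz
      have hz1 : z < 1 := hz.2.trans hzs1
      rw [(phi_hasDerivAt b c z hz.1 hz1).deriv]
      exact div_pos (hDpos z hz.1 hz.2) (mul_pos hz.1 (pow_pos (by linarith) 2))
  have hanti : StrictAntiOn f (Set.Ico zs 1) := by
    apply strictAntiOn_of_deriv_neg (convex_Ico zs 1)
    · exact (phi_contOn b c).mono (fun x hx => ⟨lt_of_lt_of_le hzs0 hx.1, hx.2⟩)
    · intro z hz
      rw [interior_Ico] at hz
      have hz0 : 0 < z := hzs0.trans hz.1
      rw [(phi_hasDerivAt b c z hz0 hz.2).deriv]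
      apply div_neg_of_neg_of_pos (hDneg z hz.1 hz.2)
      exact mul_pos hz0 (pow_pos (by linarith [hz.2]) 2)
  -- f w > 0
  have hfw : 0 < f w := by
    simp only [hf]
    linarith
  -- f zs > 0
  have hfzs : 0 < f zs := by
    rcases le_or_gt w zs with h | h
    · rcases h.lt_or_eq with h' | h'
      · have := hmono ⟨by linarith, h⟩ ⟨hzs0, le_refl _⟩ h'
        linarith
      · rw [← h']; exact hfw
    · have := hanti ⟨le_refl _, hzs1⟩ ⟨h.le, hw2⟩ h
      linarith
  -- f zl < 0
  have hfzl : f zl < 0 := by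
    have hd : 0 ≤ c * zl ^ 2 / (1 - zl) :=
      div_nonneg (by positivity) (by linarith)
    simp only [hf, hlogzl]
    linarith
  -- f q < 0
  have hfq : f q < 0 := by
    have hlogq : Real.log q < 0 := Real.log_neg (by linarith) hqlt1
    have h2b : 2 * b ≤ c * q ^ 2 / (1 - q) := by
      rw [le_div_iff₀ h1q]
      have e1 : 2 * b * (1 - q) ≤ 2 * b * (c / (8 * b)) :=
        mul_le_mul_of_nonneg_left hq2 (by linarith)
      have e2 : 2 * b * (c / (8 * b)) = c / 4 := by field_simp; ring
      have e3 : c / 4 ≤ c * q ^ 2 := by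
        nlinarith [mul_nonneg (mul_nonneg hc.le (by linarith : (0:ℝ) ≤ q - 1/2))
          (by linarith : (0:ℝ) ≤ q + 1/2)]
      linarith
    simp only [hf]
    linarith
  -- zl < zs < q strictly
  have hzlzs : zl < zs := by
    rcases hzs.1.lt_or_eq with h | h
    · exact h
    · rw [← h] at hDzs; rw [hDzs] at hDzl; linarith
  have hzsq : zs < q := by
    rcases hzs.2.lt_or_eq with h | h
    · exact h
    · rw [h] at hDzs; rw [hDzs] at hDq; linarith
  -- the two zeros
  have hcont1 : ContinuousOn f (Set.Icc zl zs) :=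
    (phi_contOn b c).mono (fun x hx => ⟨lt_of_lt_of_le hzl0 hx.1, lt_of_le_of_lt hx.2 hzs1⟩)
  obtain ⟨z₁, hz₁, hfz₁⟩ := intermediate_value_Icc hzs.1 hcont1 ⟨hfzl.le, hfzs.le⟩
  have hcont2 : ContinuousOn f (Set.Icc zs q) :=
    (phi_contOn b c).mono (fun x hx => ⟨lt_of_lt_of_le hzs0 hx.1, lt_of_le_of_lt hx.2 hqlt1⟩)
  obtain ⟨z₂, hz₂, hfz₂⟩ := intermediate_value_Icc' hzs.2 hcont2 ⟨hfq.le, hfzs.le⟩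
  have hz₁zs : z₁ < zs := by
    rcases hz₁.2.lt_or_eq with h | h
    · exact h
    · rw [h] at hfz₁; rw [hfz₁] at hfzs; exact absurd hfzs (lt_irrefl 0)
  have hzsz₂ : zs < z₂ := by
    rcases hz₁.1.lt_or_eq with _ | _
    all_goals rcases hz₂.1.lt_or_eq with h | h
    all_goals first
      | exact h
      | (rw [← h] at hfz₂; rw [hfz₂] at hfzs; exact absurd hfzs (lt_irrefl 0))
  have hz₁0 : 0 < z₁ := lt_of_lt_of_le hzl0 hz₁.1
  have hz₂1 : z₂ < 1 := lt_of_le_of_lt hz₂.2 hqlt1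
  have hset : {z ∈ Set.Ioo (0:ℝ) 1 | Real.log z + b - c * z ^ 2 / (1 - z) = 0} = {z₁, z₂} := by
    ext z
    simp only [Set.mem_sep_iff, Set.mem_Ioo, Set.mem_insert_iff, Set.mem_singleton_iff]
    constructor
    · rintro ⟨⟨h0, h1⟩, hz⟩
      have hz' : f z = 0 := hz
      rcases le_or_gt z zs with hle | hgt
      · left
        exact hmono.injOn ⟨h0, hle⟩ ⟨hz₁0, hz₁.2⟩ (by rw [hz', hfz₁])
      · right
        exact hanti.injOn ⟨hgt.le, h1⟩ ⟨hzsz₂.le, hz₂1⟩ (by rw [hz', hfz₂])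
    · rintro (rfl | rfl)
      · exact ⟨⟨hz₁0, lt_of_lt_of_le (lt_of_lt_of_le hz₁zs hzs.2) hqlt1.le⟩, hfz₁⟩
      · exact ⟨⟨lt_trans hzs0 hzsz₂, hz₂1⟩, hfz₂⟩
  rw [hset]
  exact Set.encard_pair (ne_of_lt (lt_trans hz₁zs hzsz₂))

/-- For fixed `a > 1`, for all sufficiently small `c > 0` the anabolic phase function
`φ_{a,c}(z) = log z + log a − c·z²/(1−z)` has exactly two zeros in `(0,1)`, and the larger
zero `z_φ(c)` satisfies `1 − z_φ(c) ∼ c / log a` as `c → 0⁺`. -/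
theorem stmt_2 (a : ℝ) (ha : 1 < a) :
    ∃ c₀ > (0 : ℝ),
      (∀ c : ℝ, 0 < c → c < c₀ →
        {z ∈ Set.Ioo (0 : ℝ) 1 |
          Real.log z + Real.log a - c * z ^ 2 / (1 - z) = 0}.encard = 2) ∧
      ∀ zφ : ℝ → ℝ,
        (∀ c : ℝ, 0 < c → c < c₀ →
          zφ c ∈ Set.Ioo (0 : ℝ) 1 ∧
          Real.log (zφ c) + Real.log a - c * (zφ c) ^ 2 / (1 - zφ c) = 0 ∧
          ∀ z ∈ Set.Ioo (0 : ℝ) 1,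
            Real.log z + Real.log a - c * z ^ 2 / (1 - z) = 0 → z ≤ zφ c) →
        Filter.Tendsto (fun c : ℝ => (1 - zφ c) * Real.log a / c)
          (nhdsWithin 0 (Set.Ioi 0)) (nhds 1) := by
  have hb : 0 < Real.log a := Real.log_pos ha
  set b := Real.log a with hbdef
  set w : ℝ := max (1/2) (Real.exp (-(b/2))) with hwdef
  have hw1 : 1/2 ≤ w := le_max_left _ _
  have hw2 : w < 1 := max_lt (by norm_num) (Real.exp_lt_one_iff.mpr (by linarith))
  have hw0 : 0 < w := by linarith
  have hlogw : -(b/2) ≤ Real.log w := by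
    calc -(b/2) = Real.log (Real.exp (-(b/2))) := (Real.log_exp _).symm
    _ ≤ Real.log w := Real.log_le_log (Real.exp_pos _) (le_max_right _ _)
  set zl : ℝ := Real.exp (-(2*b)) with hzldef
  have hzl0 : 0 < zl := Real.exp_pos _
  have hzl1 : zl < 1 := Real.exp_lt_one_iff.mpr (by linarith)
  have hlogzl : Real.log zl = -(2*b) := Real.log_exp _
  set c₀ : ℝ := min (min (b * (1 - w) / (2 * w ^ 2)) ((1 - zl) ^ 2 / 2)) (16 * b ^ 2)
    with hc₀def
  have hc₀pos : 0 < c₀ := by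
    apply lt_min (lt_min _ _) (by positivity)
    · apply div_pos (by nlinarith) (by positivity)
    · apply div_pos (by nlinarith) (by norm_num)
  refine ⟨c₀, hc₀pos, ?_, ?_⟩
  · intro c hc hcc₀
    have h1 : c < b * (1 - w) / (2 * w ^ 2) :=
      lt_of_lt_of_le hcc₀ ((min_le_left _ _).trans (min_le_left _ _))
    have h2 : c < (1 - zl) ^ 2 / 2 :=
      lt_of_lt_of_le hcc₀ ((min_le_left _ _).trans (min_le_right _ _))
    have h3 : c < 16 * b ^ 2 := lt_of_lt_of_le hcc₀ (min_le_right _ _)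
    have hcw : c * w ^ 2 / (1 - w) < b / 2 := by
      have h1' : c * (2 * w ^ 2) < b * (1 - w) := (lt_div_iff₀ (by positivity)).mp h1
      rw [div_lt_div_iff₀ (by linarith) (by norm_num)]
      nlinarith
    exact zero_set_eq b c w zl hb hc hw1 hw2 hlogw hzl0 hzl1 hlogzl h3 hcw h2
  · intro zφ hzφ
    have hztend : Tendsto zφ (nhdsWithin 0 (Set.Ioi 0)) (nhds 1) := by
      rw [Metric.tendsto_nhds]
      intro ε hε
      set p : ℝ := max w (1 - ε/2) with hpdef
      have hp1 : 1/2 ≤ p := hw1.trans (le_max_left _ _)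
      have hp2 : p < 1 := max_lt hw2 (by linarith)
      have hlogp : -(b/2) ≤ Real.log p :=
        hlogw.trans (Real.log_le_log hw0 (le_max_left _ _))
      set δ : ℝ := min c₀ (b * (1 - p) / (2 * p ^ 2)) with hδdef
      have hδpos : 0 < δ := lt_min hc₀pos (by apply div_pos (by nlinarith) (by positivity))
      filter_upwards [Ioo_mem_nhdsGT_of_mem (left_mem_Ico.mpr hδpos)] with c hcmem
      obtain ⟨hc0, hcδ⟩ := hcmem
      have hcc₀ : c < c₀ := lt_of_lt_of_le hcδ (min_le_left _ _)
      have h3 : c < 16 * b ^ 2 := lt_of_lt_of_le hcc₀ (min_le_right _ _)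
      have hcp : c * p ^ 2 / (1 - p) < b / 2 := by
        have h1 : c < b * (1 - p) / (2 * p ^ 2) := lt_of_lt_of_le hcδ (min_le_right _ _)
        have h1' : c * (2 * p ^ 2) < b * (1 - p) := (lt_div_iff₀ (by positivity)).mp h1
        rw [div_lt_div_iff₀ (by linarith) (by norm_num)]
        nlinarith
      obtain ⟨z, hzmem, hzeq, hpz⟩ := exists_zero_above b c p hb hc0 h3 hp1 hp2 hlogp hcp
      obtain ⟨hzφmem, hzφeq, hzφmax⟩ := hzφ c hc0 hcc₀
      have h5 : z ≤ zφ c := hzφmax z hzmem hzeq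
      have h6 : 1 - ε/2 ≤ p := le_max_right _ _
      rw [Real.dist_eq, abs_lt]
      constructor
      · linarith [hzφmem.1]
      · linarith [hzφmem.2]
    have hcont : ContinuousAt (fun z : ℝ => b * z ^ 2 / (b + Real.log z)) 1 := by
      apply ContinuousAt.div
      · fun_prop
      · exact continuousAt_const.add (Real.continuousAt_log one_ne_zero)
      · simp [Real.log_one]
        exact hb.ne'
    have hval : b * (1:ℝ) ^ 2 / (b + Real.log 1) = 1 := by
      simp [Real.log_one]
      exact hb.ne'
    have hcomp : Tendsto (fun c : ℝ => b * (zφ c) ^ 2 / (b + Real.log (zφ c)))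
        (nhdsWithin 0 (Set.Ioi 0)) (nhds 1) := by
      have := hcont.tendsto.comp hztend
      rw [hval] at this
      exact this
    apply hcomp.congr'
    filter_upwards [Ioo_mem_nhdsGT_of_mem (left_mem_Ico.mpr hc₀pos)] with c hcmem
    obtain ⟨hzφmem, hzφeq, _⟩ := hzφ c hcmem.1 hcmem.2
    obtain ⟨hz0, hz1⟩ := hzφmem
    have h1z : (0:ℝ) < 1 - zφ c := by linarith
    have key : Real.log (zφ c) + b = c * (zφ c) ^ 2 / (1 - zφ c) := by linarith
    have hpos : 0 < Real.log (zφ c) + b := by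
      rw [key]
      exact div_pos (mul_pos hcmem.1 (pow_pos hz0 2)) h1z
    have key2 : (Real.log (zφ c) + b) * (1 - zφ c) = c * (zφ c) ^ 2 := by
      rw [eq_div_iff h1z.ne'] at key
      exact key
    have hden : b + Real.log (zφ c) ≠ 0 := ne_of_gt (by linarith)
    rw [div_eq_div_iff hden hcmem.1.ne']
    linear_combination (-b) * key2
end

section
/- Let A ≥ 1 be a natural number, n ≥ 1, let p₁, …, pₙ ∈ (0,1) and s₀ ∈ (0,1). Define the backward iterates u_n = s₀ and u_j = (1 − p_{j+1}·(1 − u_{j+1}))^A for 0 ≤ j < n, and set P_n := 1 and P_j := ∏_{i=j+1}^{n} (A·p_i) for 0 ≤ j < n, and η_{n−1} := P_{n−1}/(1 − u_{n−1}). Then every u_j lies in (0,1), and for every 0 ≤ j ≤ n−1 one has the lower bound 1 − u_j ≥ P_j / (η_{n−1} + Σ_{k=j}^{n−2} P_k). -/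
/-!
Write `P j` for the products in the statement and `w j := P j / (1 - u j)`. By Bernoulli,
`(1 - x) ^ A (1 + A x) ≤ (1 - x ^ 2) ^ A ≤ 1`, so `1 - (1 - x) ^ A ≥ A x / (1 + A x)`.
Applied to `x = p_{j+1} (1 - u_{j+1})` and using `P j = A p_{j+1} P (j + 1)`, this gives the
one-step recursion `w j ≤ P j + w (j + 1)`, which telescopes to
`w j ≤ w (n - 1) + ∑_{k=j}^{n-2} P k`.
-/

open Finset

/-- The generating function `f_k` of `Binomial(A, p_k)`. -/
def binomialPGF (A : ℕ) (p s : ℝ) : ℝ := (1 - p * (1 - s)) ^ A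

theorem le_add_sum_Ico_of_le_add {M : Type*} [AddCommMonoid M] [PartialOrder M]
    [IsOrderedAddMonoid M] {w P : ℕ → M} {j m : ℕ} (hjm : j ≤ m)
    (h : ∀ k, j ≤ k → k < m → w k ≤ P k + w (k + 1)) :
    w j ≤ w m + ∑ k ∈ Ico j m, P k := by
  induction m, hjm using Nat.le_induction with
  | base => simp
  | succ m hjm ih =>
    calc w j ≤ w m + ∑ k ∈ Ico j m, P k := ih fun k hjk hkm => h k hjk (by omega)
      _ ≤ P m + w (m + 1) + ∑ k ∈ Ico j m, P k := add_le_add_left (h m hjm (by omega)) _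
      _ = w (m + 1) + ∑ k ∈ Ico j (m + 1), P k := by
        rw [sum_Ico_succ_top hjm]; abel

theorem prod_Icc_eq_mul_prod_Icc_add_one {M : Type*} [CommMonoid M] (f : ℕ → M) {a b : ℕ}
    (h : a ≤ b) : ∏ i ∈ Icc a b, f i = f a * ∏ i ∈ Icc (a + 1) b, f i := by
  rw [Icc_add_one_left_eq_Ioc, mul_prod_Ioc_eq_prod_Icc h]

theorem one_sub_pow_mul_one_add_mul_le_one (A : ℕ) {x : ℝ} (hx₀ : 0 ≤ x) (hx₁ : x ≤ 1) :
    (1 - x) ^ A * (1 + A * x) ≤ 1 :=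
  calc (1 - x) ^ A * (1 + A * x) ≤ (1 - x) ^ A * (1 + x) ^ A :=
        mul_le_mul_of_nonneg_left (one_add_mul_le_pow (by linarith) A) (by positivity)
    _ = (1 - x ^ 2) ^ A := by rw [← mul_pow]; ring
    _ ≤ 1 := pow_le_one₀ (by nlinarith) (by nlinarith)

theorem binomialPGF_mem_Ioo {A : ℕ} (hA : A ≠ 0) {p s : ℝ} (hp : p ∈ Set.Ioc 0 1)
    (hs : s ∈ Set.Ioo 0 1) : binomialPGF A p s ∈ Set.Ioo 0 1 := by
  obtain ⟨hp₀, hp₁⟩ := hp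
  obtain ⟨hs₀, hs₁⟩ := hs
  have hx₀ : 0 < p * (1 - s) := mul_pos hp₀ (by linarith)
  have hx₁ : p * (1 - s) < 1 := by nlinarith
  exact ⟨pow_pos (by linarith) A, pow_lt_one₀ (by linarith) (by linarith) hA⟩

theorem mul_div_one_sub_binomialPGF_le {A : ℕ} (hA : A ≠ 0) {p s : ℝ} (hp : p ∈ Set.Ioc 0 1)
    (hs : s ∈ Set.Ico 0 1) : A * p / (1 - binomialPGF A p s) ≤ A * p + (1 - s)⁻¹ := by
  obtain ⟨hp₀, hp₁⟩ := hp
  obtain ⟨hs₀, hs₁⟩ := hs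
  have hy : 0 < 1 - s := by linarith
  have hx₀ : 0 < p * (1 - s) := mul_pos hp₀ hy
  have hAx : 0 < (A : ℝ) * (p * (1 - s)) := mul_pos (by positivity) hx₀
  have hbound := one_sub_pow_mul_one_add_mul_le_one A hx₀.le (by nlinarith)
  have hd : A * (p * (1 - s)) ≤ (1 - binomialPGF A p s) * (1 + A * (p * (1 - s))) := by
    unfold binomialPGF; nlinarith
  have hd₀ : 0 < 1 - binomialPGF A p s := by nlinarith
  rw [div_le_iff₀ hd₀]
  calc (A : ℝ) * p = A * (p * (1 - s)) / (1 - s) := by field_simp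
    _ ≤ (1 - binomialPGF A p s) * (1 + A * (p * (1 - s))) / (1 - s) := by gcongr
    _ = (A * p + (1 - s)⁻¹) * (1 - binomialPGF A p s) := by field_simp; ring

/-- Backward iterates of binomial generating functions: with `u n = s₀ ∈ (0,1)` and
`u j = (1 − p_{j+1}(1 − u_{j+1}))^A`, setting `P j = ∏_{i=j+1}^n (A·p_i)` and
`η = P_{n−1}/(1 − u_{n−1})`, every `u j` lies in `(0,1)` and
`1 − u j ≥ P j / (η + Σ_{k=j}^{n−2} P k)` for all `0 ≤ j ≤ n−1`. -/
theorem stmt_15 (A n : ℕ) (hA : 1 ≤ A) (hn : 1 ≤ n) (p u : ℕ → ℝ)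
    (hp : ∀ k, 1 ≤ k → k ≤ n → p k ∈ Set.Ioo (0 : ℝ) 1)
    (hun : u n ∈ Set.Ioo (0 : ℝ) 1)
    (hu : ∀ j, j < n → u j = (1 - p (j + 1) * (1 - u (j + 1))) ^ A) :
    (∀ j, j ≤ n → u j ∈ Set.Ioo (0 : ℝ) 1) ∧
    ∀ j, j < n →
      (∏ i ∈ Finset.Icc (j + 1) n, ((A : ℝ) * p i)) /
          ((∏ i ∈ Finset.Icc n n, ((A : ℝ) * p i)) / (1 - u (n - 1)) +
            ∑ k ∈ Finset.Ico j (n - 1), ∏ i ∈ Finset.Icc (k + 1) n, ((A : ℝ) * p i)) ≤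
        1 - u j := by
  have hf : ∀ j < n, u j = binomialPGF A (p (j + 1)) (u (j + 1)) := hu
  have hp' : ∀ k < n, p (k + 1) ∈ Set.Ioc 0 1 := fun k hk =>
    Set.Ioo_subset_Ioc_self (hp (k + 1) (by omega) (by omega))
  have mem : ∀ j ≤ n, u j ∈ Set.Ioo 0 1 := fun j hj =>
    Nat.decreasingInduction (motive := fun j _ => u j ∈ Set.Ioo 0 1)
      (fun k hk ih => hf k hk ▸ binomialPGF_mem_Ioo (by omega) (hp' k hk) ih) hun hj
  refine ⟨mem, fun j hj => ?_⟩
  rw [show Icc n n = Icc (n - 1 + 1) n by rw [Nat.sub_add_cancel hn]]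
  set P : ℕ → ℝ := fun j => ∏ i ∈ Icc (j + 1) n, (A : ℝ) * p i
  set w : ℕ → ℝ := fun j => P j / (1 - u j)
  have hP₀ : ∀ k, 0 ≤ P k := fun k => prod_nonneg fun i hi => by
    obtain ⟨hki, hin⟩ := mem_Icc.1 hi
    exact mul_nonneg (Nat.cast_nonneg A) (hp i (by omega) hin).1.le
  have hP : ∀ k < n, P k = A * p (k + 1) * P (k + 1) := fun k hk =>
    prod_Icc_eq_mul_prod_Icc_add_one (fun i => (A : ℝ) * p i) (by omega)
  have hw : ∀ k < n, w k ≤ P k + w (k + 1) := fun k hk => by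
    calc w k = P (k + 1) * (A * p (k + 1) / (1 - binomialPGF A (p (k + 1)) (u (k + 1)))) := by
          simp only [w, hP k hk, ← hf k hk]; ring
      _ ≤ P (k + 1) * (A * p (k + 1) + (1 - u (k + 1))⁻¹) := mul_le_mul_of_nonneg_left
          (mul_div_one_sub_binomialPGF_le (by omega) (hp' k hk)
            (Set.Ioo_subset_Ico_self (mem (k + 1) hk))) (hP₀ _)
      _ = P k + w (k + 1) := by simp only [w, hP k hk]; ring
  have hwj : w j ≤ w (n - 1) + ∑ k ∈ Ico j (n - 1), P k :=
    le_add_sum_Ico_of_le_add (by omega) fun k _ hk => hw k (by omega)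
  have hu₀ : 0 < 1 - u j := sub_pos.2 (mem j hj.le).2
  exact div_le_of_le_mul₀ ((div_nonneg (hP₀ j) hu₀.le).trans hwj) hu₀.le
    ((div_le_iff₀' hu₀).1 hwj)
end
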